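/- arXiv:0905.4513 — 5 statements merged into one kernel-verified Lean document; each statement's English description precedes it below -/
import Mathlib

section
/- Let p be a prime and G a finite group such that every element of order p lies in the k-th term of the upper central series of G for some k ≥ 1. Then the subgroup of G generated by all elements of order dividing p is a p-group. -/
/-- `Omega p i G` is the subgroup of `G` generated by all elements of order dividing `p^i`. -/
def Omega (p i : ℕ) (G : Type*) [Group G] : Subgroup G :=
  Subgroup.closure {x : G | x ^ p ^ i = 1}

/-!
Since `Ω₁(G,p)` lies in `ζ_k(G)`, it is nilpotent. In a finite nilpotent group the Sylow
`p`-subgroup is normal, hence contains every `p`-element. Applied inside `Ω₁(G,p)`, its Sylow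
`p`-subgroup contains all the generators, so it is the whole of `Ω₁(G,p)`.
-/

section

open Subgroup

variable {G : Type*} [Group G]

theorem Subgroup.isNilpotent_of_le_upperCentralSeries {H : Subgroup G} {k : ℕ}
    (h : H ≤ upperCentralSeries G k) : Group.IsNilpotent H := by
  refine (nilpotent_iff_finite_ascending_central_series H).mpr
    ⟨k, fun n => (upperCentralSeries G n).comap H.subtype, ⟨?_, ?_⟩, ?_⟩
  · simp only [upperCentralSeries_zero, MonoidHom.comap_bot, ker_subtype]
  · exact fun x n hx y => mem_upperCentralSeries_succ_iff.mp hx y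
  · exact eq_top_iff.mpr fun x _ => h x.2

theorem IsPGroup.zpowers_of_pow_eq_one {p n : ℕ} {g : G} (hg : g ^ p ^ n = 1) :
    IsPGroup p (zpowers g) :=
  IsPGroup.of_card_dvd_pow (by rw [Nat.card_zpowers]; exact orderOf_dvd_of_pow_eq_one hg)

theorem Sylow.mem_of_pow_eq_one_of_normal {p n : ℕ} (P : Sylow p G) [P.Normal] {g : G}
    (hg : g ^ p ^ n = 1) : g ∈ P :=
  zpowers_le.mp <| sup_eq_right.mp <|
    P.is_maximal' ((IsPGroup.zpowers_of_pow_eq_one hg).to_sup_of_normal_right P.isPGroup')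
      le_sup_right

theorem IsPGroup.closure_of_isNilpotent [Finite G] [Group.IsNilpotent G] {p : ℕ} [Fact p.Prime]
    {S : Set G} (hS : ∀ g ∈ S, ∃ n, g ^ p ^ n = 1) : IsPGroup p (closure S) := by
  obtain ⟨P⟩ : Nonempty (Sylow p G) := inferInstance
  refine P.isPGroup'.to_le ((closure_le _).mpr fun g hg => ?_)
  obtain ⟨n, hgn⟩ := hS g hg
  exact P.mem_of_pow_eq_one_of_normal hgn

theorem IsPGroup.closure_of_isNilpotent_closure [Finite G] {p : ℕ} [Fact p.Prime] {S : Set G}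
    [Group.IsNilpotent (closure S)] (hS : ∀ g ∈ S, ∃ n, g ^ p ^ n = 1) :
    IsPGroup p (closure S) := by
  have hS' : ∀ g ∈ ((↑) : closure S → G) ⁻¹' S, ∃ n, g ^ p ^ n = 1 := fun g hg =>
    (hS g hg).imp fun n hgn => Subtype.ext (by simpa using hgn)
  have htop := IsPGroup.closure_of_isNilpotent hS'
  rw [closure_closure_coe_preimage] at htop
  exact htop.of_equiv topEquiv

end

theorem omega_isPGroup_of_le_upperCentralSeries_general
    (p : ℕ) (hp : p.Prime) (G : Type*) [Group G] [Finite G] (k : ℕ)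
    (h : Omega p 1 G ≤ upperCentralSeries G k) :
    IsPGroup p (Omega p 1 G) := by
  have : Fact p.Prime := ⟨hp⟩
  have : Group.IsNilpotent (Subgroup.closure {x : G | x ^ p ^ 1 = 1}) :=
    Subgroup.isNilpotent_of_le_upperCentralSeries h
  exact IsPGroup.closure_of_isNilpotent_closure fun g hg => ⟨1, hg⟩

/-- If every element of order dividing `p` of a finite group `G` lies in the
`k`-th term of the upper central series (`k ≥ 1`), then `Ω₁(G,p)` is a `p`-group. -/
theorem omega_isPGroup_of_le_upperCentralSeries
    (p : ℕ) (hp : p.Prime) (G : Type*) [Group G] [Finite G] (k : ℕ) (hk : 1 ≤ k)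
    (h : Omega p 1 G ≤ upperCentralSeries G k) :
    IsPGroup p (Omega p 1 G) :=
  omega_isPGroup_of_le_upperCentralSeries_general p hp G k h
end

section
/- Let G be a finite group that is p-central of height k, i.e., every element of order p lies in ζ_k(G). If p^e is the exponent of Ω₁(G,p), then the subgroup generated by all p^{e+k}-th powers of elements of G centralizes Ω₁(G,p). -/
/-!
Let `K = ⟨S⟩` be generated by elements of order dividing `p`. If `⁅y, b⁆` is central for every
`b ∈ K`, then `b ↦ ⁅y, b⁆` is a homomorphism on `K`, so `⁅y, b⁆ ^ p = 1`; as `⁅y, b⁆` commutes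
with `y`, this reads `⁅y ^ p, b⁆ = 1`. Applied in `G ⧸ ζ_m(G)`, it turns `⁅y, K⁆ ≤ ζ_(m+1)(G)`
into `⁅y ^ p, K⁆ ≤ ζ_m(G)`. Starting from `⁅x, K⁆ ≤ ζ_k(G)` and descending `k` times, `x ^ p ^ k`
centralizes `K`, hence so does its power `x ^ p ^ (e + k)`.
-/

open scoped commutatorElement

section

variable {G : Type*} [Group G]

theorem commutatorElement_pow_left_of_commute {y b : G} (h : Commute y ⁅y, b⁆) (n : ℕ) :
    ⁅y ^ n, b⁆ = ⁅y, b⁆ ^ n := by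
  induction n with
  | zero => simp
  | succ n ih =>
    rw [pow_succ', commutatorElement_mul_left_eq_conj_mul, ih, (h.pow_right n).eq, pow_succ,
      mul_inv_cancel_right]

theorem commutatorElement_mul_right_of_mem_center (y b : G) {c : G}
    (h : ⁅y, c⁆ ∈ Subgroup.center G) : ⁅y, b * c⁆ = ⁅y, b⁆ * ⁅y, c⁆ := by
  rw [commutatorElement_mul_right_eq_mul_conj, mul_assoc _ b, Subgroup.mem_center_iff.mp h b,
    mul_assoc, mul_inv_cancel_right]

def commutatorHom (y : G) (K : Subgroup G) (hK : ∀ b ∈ K, ⁅y, b⁆ ∈ Subgroup.center G) :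
    K →* G where
  toFun b := ⁅y, b⁆
  map_one' := commutatorElement_one_right y
  map_mul' a b := commutatorElement_mul_right_of_mem_center y a (hK b b.2)

theorem commutatorElement_pow_eq_one_of_mem_center {p : ℕ} {S : Set G} (hS : ∀ s ∈ S, s ^ p = 1)
    {y : G} (hy : ∀ b ∈ Subgroup.closure S, ⁅y, b⁆ ∈ Subgroup.center G) {b : G}
    (hb : b ∈ Subgroup.closure S) : ⁅y ^ p, b⁆ = 1 := by
  set f := commutatorHom y (Subgroup.closure S) hy
  have hf : ∀ b (hb : b ∈ Subgroup.closure S), f ⟨b, hb⟩ ^ p = 1 := by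
    intro b hb
    induction hb using Subgroup.closure_induction with
    | mem s hs =>
      have hsp : (⟨s, Subgroup.subset_closure hs⟩ : Subgroup.closure S) ^ p = 1 :=
        Subtype.ext (hS s hs)
      rw [← map_pow, hsp, map_one]
    | one => rw [show (⟨1, one_mem _⟩ : Subgroup.closure S) = 1 from rfl, map_one, one_pow]
    | mul a c ha hc iha ihc =>
      have hcomm : Commute (f ⟨a, ha⟩) (f ⟨c, hc⟩) := Subgroup.mem_center_iff.mp (hy c hc) _
      rw [show (⟨a * c, mul_mem ha hc⟩ : Subgroup.closure S) = ⟨a, ha⟩ * ⟨c, hc⟩ from rfl, map_mul,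
        hcomm.mul_pow, iha, ihc, one_mul]
    | inv a ha iha =>
      rw [show (⟨a⁻¹, inv_mem ha⟩ : Subgroup.closure S) = (⟨a, ha⟩)⁻¹ from rfl, map_inv, inv_pow,
        iha, inv_one]
  have hcomm : Commute y ⁅y, b⁆ := Subgroup.mem_center_iff.mp (hy b hb) y
  rw [commutatorElement_pow_left_of_commute hcomm]
  exact hf b hb

theorem mk_mem_center_iff_mem_upperCentralSeries_succ (m : ℕ) (g : G) :
    (g : G ⧸ Subgroup.upperCentralSeries G m) ∈
        Subgroup.center (G ⧸ Subgroup.upperCentralSeries G m) ↔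
      g ∈ Subgroup.upperCentralSeries G (m + 1) := by
  rw [← QuotientGroup.mk'_apply, ← Subgroup.mem_comap,
    ← Subgroup.upperCentralSeriesStep_eq_comap_center]
  rfl

theorem commutatorElement_pow_mem_upperCentralSeries {p m : ℕ} {S : Set G}
    (hS : ∀ s ∈ S, s ^ p = 1) {y : G}
    (hy : ∀ b ∈ Subgroup.closure S, ⁅y, b⁆ ∈ Subgroup.upperCentralSeries G (m + 1)) {b : G}
    (hb : b ∈ Subgroup.closure S) : ⁅y ^ p, b⁆ ∈ Subgroup.upperCentralSeries G m := by
  set π := QuotientGroup.mk' (Subgroup.upperCentralSeries G m)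
  have hSπ : ∀ s ∈ π '' S, s ^ p = 1 := by
    rintro _ ⟨s, hs, rfl⟩
    rw [← map_pow, hS s hs, map_one]
  have hyπ : ∀ b ∈ Subgroup.closure (π '' S), ⁅π y, b⁆ ∈ Subgroup.center _ := by
    rw [← MonoidHom.map_closure]
    rintro _ ⟨b, hb, rfl⟩
    rw [← map_commutatorElement]
    exact (mk_mem_center_iff_mem_upperCentralSeries_succ m _).mpr (hy b hb)
  have hbπ : π b ∈ Subgroup.closure (π '' S) := by
    rw [← MonoidHom.map_closure]
    exact Subgroup.mem_map_of_mem π hb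
  rw [← QuotientGroup.eq_one_iff, ← QuotientGroup.mk'_apply, map_commutatorElement, map_pow]
  exact commutatorElement_pow_eq_one_of_mem_center hSπ hyπ hbπ

theorem commutatorElement_pow_pow_mem_upperCentralSeries {p : ℕ} {S : Set G}
    (hS : ∀ s ∈ S, s ^ p = 1) (m j : ℕ) {y : G}
    (hy : ∀ b ∈ Subgroup.closure S, ⁅y, b⁆ ∈ Subgroup.upperCentralSeries G (m + j)) {b : G}
    (hb : b ∈ Subgroup.closure S) : ⁅y ^ p ^ j, b⁆ ∈ Subgroup.upperCentralSeries G m := by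
  induction j generalizing y with
  | zero => simpa using hy b hb
  | succ j ih =>
    rw [pow_succ', pow_mul]
    exact ih fun b hb => commutatorElement_pow_mem_upperCentralSeries hS hy hb

theorem commute_pow_pow_of_closure_le_upperCentralSeries {p k : ℕ} {S : Set G}
    (hS : ∀ s ∈ S, s ^ p = 1) (hSk : Subgroup.closure S ≤ Subgroup.upperCentralSeries G k)
    (x : G) {b : G} (hb : b ∈ Subgroup.closure S) : Commute (x ^ p ^ k) b := by
  have hx : ∀ b ∈ Subgroup.closure S, ⁅x, b⁆ ∈ Subgroup.upperCentralSeries G (0 + k) := by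
    intro b hb
    rw [zero_add, commutatorElement_def]
    exact mul_mem (Subgroup.Normal.conj_mem inferInstance b (hSk hb) x) (inv_mem (hSk hb))
  have h := commutatorElement_pow_pow_mem_upperCentralSeries hS 0 k hx hb
  rwa [Subgroup.upperCentralSeries_zero, Subgroup.mem_bot,
    commutatorElement_eq_one_iff_commute] at h

end

theorem powers_le_centralizer_omega_general
    (p : ℕ) (G : Type*) [Group G] (k : ℕ)
    (h : Omega p 1 G ≤ upperCentralSeries G k)
    (e : ℕ) :
    Subgroup.closure {y : G | ∃ x : G, y = x ^ p ^ (e + k)} ≤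
      Subgroup.centralizer (Omega p 1 G : Set G) := by
  have hS : ∀ s ∈ {x : G | x ^ p ^ 1 = 1}, s ^ p = 1 := fun s hs => by rwa [pow_one] at hs
  rw [Subgroup.closure_le]
  rintro _ ⟨x, rfl⟩ b hb
  rw [add_comm, pow_add, pow_mul]
  exact ((commute_pow_pow_of_closure_le_upperCentralSeries hS h x hb).pow_left _).eq.symm

/-- If `G` is a finite `p`-central group of height `k` and `p^e` is the exponent
of `Ω₁(G,p)`, then the subgroup generated by all `p^(e+k)`-th powers centralizes `Ω₁(G,p)`. -/
theorem powers_le_centralizer_omega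
    (p : ℕ) (hp : p.Prime) (G : Type*) [Group G] [Finite G] (k : ℕ) (hk : 1 ≤ k)
    (h : Omega p 1 G ≤ upperCentralSeries G k)
    (e : ℕ) (he : Monoid.exponent (Omega p 1 G) = p ^ e) :
    Subgroup.closure {y : G | ∃ x : G, y = x ^ p ^ (e + k)} ≤
      Subgroup.centralizer (Omega p 1 G : Set G) :=
  powers_le_centralizer_omega_general p G k h e
end

section
/- For any odd prime r, SL₂(F_r) is 2-central, i.e. every element of order 2 in it is central (its unique involution −I is central), but it is not 2-nilpotent; hence a finite group G in which every element of order 2 is central need not be 2-nilpotent. -/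
open Matrix

section Aux

variable {R : Type*} [CommRing R]

/-- upper elementary matrix in SL₂ -/
def sl2u (t : R) : SpecialLinearGroup (Fin 2) R :=
  ⟨!![1, t; 0, 1], by simp [Matrix.det_fin_two_of]⟩

/-- lower elementary matrix in SL₂ -/
def sl2l (t : R) : SpecialLinearGroup (Fin 2) R :=
  ⟨!![1, 0; t, 1], by simp [Matrix.det_fin_two_of]⟩

lemma sl2u_mul (s t : R) : sl2u s * sl2u t = sl2u (s + t) := by
  apply Subtype.ext
  show (!![1, s; 0, 1] : Matrix (Fin 2) (Fin 2) R) * !![1, t; 0, 1] = _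
  rw [Matrix.mul_fin_two]
  simp [sl2u, add_comm]

lemma sl2l_mul (s t : R) : sl2l s * sl2l t = sl2l (s + t) := by
  apply Subtype.ext
  show (!![1, 0; s, 1] : Matrix (Fin 2) (Fin 2) R) * !![1, 0; t, 1] = _
  rw [Matrix.mul_fin_two]
  simp [sl2l, add_comm]

lemma sl2u_zero : sl2u (0 : R) = 1 := by
  apply Subtype.ext
  show (!![1, 0; 0, 1] : Matrix (Fin 2) (Fin 2) R) = 1
  rw [Matrix.one_fin_two]

lemma sl2l_zero : sl2l (0 : R) = 1 := by
  apply Subtype.ext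
  show (!![1, 0; 0, 1] : Matrix (Fin 2) (Fin 2) R) = 1
  rw [Matrix.one_fin_two]

lemma sl2u_pow (t : R) (n : ℕ) : sl2u t ^ n = sl2u (n * t) := by
  induction n with
  | zero => simp [sl2u_zero]
  | succ n ih => rw [pow_succ, ih, sl2u_mul]; push_cast; ring_nf

lemma sl2l_pow (t : R) (n : ℕ) : sl2l t ^ n = sl2l (n * t) := by
  induction n with
  | zero => simp [sl2l_zero]
  | succ n ih => rw [pow_succ, ih, sl2l_mul]; push_cast; ring_nf

end Aux

section Field

variable {F : Type*} [Field F]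

lemma sl2_mem_of_lowerleft_ne_zero (N : Subgroup (SpecialLinearGroup (Fin 2) F))
    (hu : ∀ t : F, sl2u t ∈ N) (hl : ∀ t : F, sl2l t ∈ N)
    (g : SpecialLinearGroup (Fin 2) F) (hc : (g : Matrix (Fin 2) (Fin 2) F) 1 0 ≠ 0) :
    g ∈ N := by
  obtain ⟨a, b, c, d, hM⟩ : ∃ a b c d, (g : Matrix (Fin 2) (Fin 2) F) = !![a, b; c, d] :=
    ⟨_, _, _, _, Matrix.eta_fin_two _⟩
  have hc' : c ≠ 0 := by rw [hM] at hc; simpa using hc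
  have hdet : a * d - b * c = 1 := by
    have h2 := g.2; rw [hM, Matrix.det_fin_two_of] at h2; exact h2
  have key : g = sl2u ((a - 1) / c) * sl2l c * sl2u ((d - 1) / c) := by
    apply Subtype.ext
    show (g : Matrix (Fin 2) (Fin 2) F) = !![1, (a-1)/c; 0, 1] * !![1, 0; c, 1] * !![1, (d-1)/c; 0, 1]
    rw [hM, Matrix.mul_fin_two, Matrix.mul_fin_two]
    refine Matrix.ext fun i j => ?_
    fin_cases i <;> fin_cases j <;> simp <;> field_simp <;> first | linear_combination hdet | linear_combination 2*hdet | linear_combination -hdet | linear_combination -2*hdet | ring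
  exact key ▸ N.mul_mem (N.mul_mem (hu _) (hl _)) (hu _)



lemma sl2_mem_all (N : Subgroup (SpecialLinearGroup (Fin 2) F))
    (hu : ∀ t : F, sl2u t ∈ N) (hl : ∀ t : F, sl2l t ∈ N)
    (g : SpecialLinearGroup (Fin 2) F) : g ∈ N := by
  by_cases hc : (g : Matrix (Fin 2) (Fin 2) F) 1 0 ≠ 0
  · exact sl2_mem_of_lowerleft_ne_zero N hu hl g hc
  · push_neg at hc
    have hd : (g : Matrix (Fin 2) (Fin 2) F) 1 1 ≠ 0 := by
      intro hd0
      have h2 := g.2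
      rw [Matrix.det_fin_two, hc, hd0] at h2
      simp at h2
    have hg' : ((g * sl2l 1 : SpecialLinearGroup (Fin 2) F) : Matrix (Fin 2) (Fin 2) F) 1 0 ≠ 0 := by
      have : ((g * sl2l 1 : SpecialLinearGroup (Fin 2) F) : Matrix (Fin 2) (Fin 2) F) 1 0
          = (g : Matrix (Fin 2) (Fin 2) F) 1 1 := by
        rw [Matrix.SpecialLinearGroup.coe_mul, Matrix.mul_apply, Fin.sum_univ_two]
        simp [sl2l, hc]
      rw [this]; exact hd
    have hmem := sl2_mem_of_lowerleft_ne_zero N hu hl _ hg'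
    have hinv : (sl2l (1 : F))⁻¹ = sl2l (-1) := by
      apply inv_eq_of_mul_eq_one_right
      rw [sl2l_mul]; simpa using sl2l_zero
    have : g = (g * sl2l 1) * (sl2l 1)⁻¹ := by group
    rw [this, hinv]
    exact N.mul_mem hmem (hl _)

end Field

/-- for an odd prime `r`, `SL₂(F_r)` is `2`-central (its unique element of
order `2` is `-1`, which is central), but it is not `2`-nilpotent (no Sylow `2`-subgroup
has a normal complement). -/
theorem sl2_two_central_not_two_nilpotent
    (r : ℕ) (hr : r.Prime) (hodd : Odd r) [Fact r.Prime] :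
    (∀ g : SpecialLinearGroup (Fin 2) (ZMod r), orderOf g = 2 → g = -1) ∧
      (-1 : SpecialLinearGroup (Fin 2) (ZMod r)) ∈
        Subgroup.center (SpecialLinearGroup (Fin 2) (ZMod r)) ∧
      ∀ P : Sylow 2 (SpecialLinearGroup (Fin 2) (ZMod r)),
        ¬ ∃ N : Subgroup (SpecialLinearGroup (Fin 2) (ZMod r)),
            N.Normal ∧ N.IsComplement' (P : Subgroup (SpecialLinearGroup (Fin 2) (ZMod r))) := by
  have h2ne : (2 : ZMod r) ≠ 0 := by
    intro h
    rw [show (2 : ZMod r) = ((2 : ℕ) : ZMod r) by push_cast; ring,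
      ZMod.natCast_eq_zero_iff] at h
    rw [(Nat.prime_dvd_prime_iff_eq hr Nat.prime_two).mp h] at hodd
    simp [Nat.odd_iff] at hodd
  have hneg1 : (-1 : SpecialLinearGroup (Fin 2) (ZMod r)) ≠ 1 := by
    intro h
    have := congrFun (congrFun (congrArg Subtype.val h) 0) 0
    rw [Matrix.SpecialLinearGroup.coe_neg] at this
    simp at this
    exact h2ne (by linear_combination -this)
  refine ⟨?_, ?_, ?_⟩
  · -- unique involution
    intro g hg
    have hg2 : g ^ 2 = 1 := by
      have := pow_orderOf_eq_one g; rwa [hg] at this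
    obtain ⟨a, b, c, d, hM⟩ :
        ∃ a b c d, (g : Matrix (Fin 2) (Fin 2) (ZMod r)) = !![a, b; c, d] :=
      ⟨_, _, _, _, Matrix.eta_fin_two _⟩
    have hmm : (!![a, b; c, d] : Matrix (Fin 2) (Fin 2) (ZMod r)) * !![a, b; c, d] = 1 := by
      rw [← hM]
      have := congrArg Subtype.val hg2
      rw [Matrix.SpecialLinearGroup.coe_pow, pow_two] at this
      simpa using this
    rw [Matrix.mul_fin_two, Matrix.one_fin_two] at hmm
    have e00 : a * a + b * c = 1 := congrFun (congrFun hmm 0) 0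
    have e01 : a * b + b * d = 0 := congrFun (congrFun hmm 0) 1
    have e10 : c * a + d * c = 0 := congrFun (congrFun hmm 1) 0
    have hdet : a * d - b * c = 1 := by
      have h2 := g.2; rw [hM, Matrix.det_fin_two_of] at h2; exact h2
    by_cases htr : a + d = 0
    · exact absurd (by linear_combination -e00 - hdet + a * htr) h2ne
    · have hb : b = 0 := by
        rcases mul_eq_zero.mp (show b * (a + d) = 0 by linear_combination e01) with h | h
        · exact h
        · exact absurd h htr
      have hcz : c = 0 := by
        rcases mul_eq_zero.mp (show c * (a + d) = 0 by linear_combination e10) with h | h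
        · exact h
        · exact absurd h htr
      have ha2 : a * a = 1 := by linear_combination e00 - b * hcz
      rcases mul_self_eq_one_iff.mp ha2 with ha | ha
      · exfalso
        have hd1 : d = 1 := by
          have : a * d = 1 := by linear_combination hdet + c * hb
          rw [ha, one_mul] at this; exact this
        have : g = 1 := by
          apply Subtype.ext
          rw [hM, hb, hcz, ha, hd1, Matrix.SpecialLinearGroup.coe_one, Matrix.one_fin_two]
        rw [this, orderOf_one] at hg
        norm_num at hg
      · have hd1 : d = -1 := by
          have : a * d = 1 := by linear_combination hdet + c * hb
          rw [ha] at this; linear_combination -this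
        apply Subtype.ext
        rw [hM, hb, hcz, ha, hd1, Matrix.SpecialLinearGroup.coe_neg,
          Matrix.SpecialLinearGroup.coe_one, Matrix.one_fin_two]
        refine Matrix.ext fun i j => ?_
        fin_cases i <;> fin_cases j <;> simp
  · -- -1 is central
    exact Subgroup.mem_center_iff.mpr fun g => by rw [mul_neg_one, neg_one_mul]
  · -- no normal 2-complement
    rintro P ⟨N, hNnorm, hcomp⟩
    obtain ⟨k, hk⟩ := IsPGroup.exists_card_eq P.2
    have hindex : N.index = 2 ^ k := by
      rw [hcomp.symm.index_eq_card, hk]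
    -- every element of order dividing r is in N
    have hmemN : ∀ g : SpecialLinearGroup (Fin 2) (ZMod r), g ^ r = 1 → g ∈ N := by
      intro g hgr
      have h1 : orderOf ((QuotientGroup.mk g : _ ⧸ N)) ∣ r :=
        orderOf_dvd_of_pow_eq_one (by rw [← QuotientGroup.mk_pow, hgr]; rfl)
      have h2 : orderOf ((QuotientGroup.mk g : _ ⧸ N)) ∣ 2 ^ k := by
        rw [← hindex, Subgroup.index_eq_card]
        exact orderOf_dvd_natCard _
      have hcop : Nat.Coprime r (2 ^ k) :=
        Nat.Coprime.pow_right _ (Nat.coprime_two_right.mpr hodd)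
      have : orderOf ((QuotientGroup.mk g : _ ⧸ N)) = 1 :=
        Nat.eq_one_of_dvd_coprimes hcop h1 h2
      rw [orderOf_eq_one_iff] at this
      exact (QuotientGroup.eq_one_iff g).mp this
    have hNtop : N = ⊤ := by
      rw [eq_top_iff]
      intro g _
      refine sl2_mem_all N (fun t => hmemN _ ?_) (fun t => hmemN _ ?_) g
      · rw [sl2u_pow, ZMod.natCast_self, zero_mul, sl2u_zero]
      · rw [sl2l_pow, ZMod.natCast_self, zero_mul, sl2l_zero]
    rw [hNtop] at hcomp
    have hPbot : (P : Subgroup (SpecialLinearGroup (Fin 2) (ZMod r))) = ⊥ :=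
      Subgroup.isComplement'_top_left.mp hcomp
    -- but -1 has order 2, giving a nontrivial 2-subgroup
    have horder : orderOf (-1 : SpecialLinearGroup (Fin 2) (ZMod r)) = 2 := by
      rw [orderOf_eq_prime (by rw [pow_two]; simp) hneg1]
    have hzp : IsPGroup 2 (Subgroup.zpowers (-1 : SpecialLinearGroup (Fin 2) (ZMod r))) := by
      apply IsPGroup.of_card (n := 1)
      rw [Nat.card_zpowers, horder, pow_one]
    have := P.3 hzp (hPbot ▸ bot_le)
    rw [hPbot] at this
    have : (-1 : SpecialLinearGroup (Fin 2) (ZMod r)) ∈ (⊥ : Subgroup _) := by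
      rw [← this]; exact Subgroup.mem_zpowers _
    exact hneg1 (Subgroup.mem_bot.mp this)
end

section
/- Let P be a finite p-group, p odd, that is p-central of height p−1. Then P contains no subgroup isomorphic to the regular wreath product C_p ≀ C_p. -/
variable (p : ℕ)

/-- The cyclic-shift automorphism of `(C_p)^p = ZMod p → Multiplicative (ZMod p)`. -/
def shiftAut (c : ZMod p) : MulAut (ZMod p → Multiplicative (ZMod p)) where
  toFun f := fun i => f (i + c)
  invFun f := fun i => f (i - c)
  left_inv f := by funext i; simp
  right_inv f := by funext i; simp
  map_mul' f g := rfl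

/-- The action of the top `C_p` on the base `(C_p)^p` by cyclic shifts. -/
def shiftHom : Multiplicative (ZMod p) →* MulAut (ZMod p → Multiplicative (ZMod p)) where
  toFun c := shiftAut p c.toAdd
  map_one' := by
    ext f i
    simp [shiftAut]
  map_mul' c d := by
    ext f i
    simp [shiftAut, add_comm, add_assoc, add_left_comm]

/-- The regular wreath product `C_p ≀ C_p`. -/
def WreathCpCp : Type :=
  (ZMod p → Multiplicative (ZMod p)) ⋊[shiftHom p] Multiplicative (ZMod p)

instance : Group (WreathCpCp p) := by unfold WreathCpCp; infer_instance

/-!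
In `C_p ≀ C_p` the commutator of a base element `a` with the generator `t` of the top group is
the base element `Δa`, where `(Δa)(i) = a(i) - a(i+1)`. Starting from `δ₀`, the iterates
`Δ^k δ₀` stay nonzero up to `k = p - 1` (their value at `0` is always `1`), so `t` is not in
`ζ_{p-1}`. But `t` has order `p`, so it lies in `Ω₁(P) ≤ ζ_{p-1}(P)`, and the upper central
series of `P` pulls back into that of any subgroup.
-/

open SemidirectProduct
open scoped commutatorElement

theorem Subgroup.comap_upperCentralSeries_le {G H : Type*} [Group G] [Group H] {f : G →* H}
    (hf : Function.Injective f) :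
    ∀ n, (upperCentralSeries H n).comap f ≤ upperCentralSeries G n
  | 0 => fun _ hx => (map_eq_one_iff f hf).1 hx
  | n + 1 => fun x hx y => comap_upperCentralSeries_le hf n <| by
      rw [mem_comap, map_commutatorElement]
      exact mem_upperCentralSeries_succ_iff.1 hx (f y)

namespace WreathCpCp

variable {p}

def base : (ZMod p → Multiplicative (ZMod p)) →* WreathCpCp p := inl

def rot : Multiplicative (ZMod p) →* WreathCpCp p := inr

theorem base_injective : Function.Injective (base (p := p)) := inl_injective

theorem base_shiftHom (g : Multiplicative (ZMod p)) (a : ZMod p → Multiplicative (ZMod p)) :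
    base (shiftHom p g a) = rot g * base a * rot g⁻¹ :=
  inl_aut g a

theorem rot_pow_self (g : Multiplicative (ZMod p)) : rot g ^ p = 1 := by
  rw [← map_pow, ← ofAdd_toAdd g, ← ofAdd_nsmul, nsmul_eq_mul, ZMod.natCast_self, zero_mul,
    ofAdd_zero, map_one]

def diff (a : ZMod p → Multiplicative (ZMod p)) : ZMod p → Multiplicative (ZMod p) :=
  fun i => a i / a (i + 1)

theorem commutatorElement_base_rot (a : ZMod p → Multiplicative (ZMod p)) :
    ⁅base a, rot (.ofAdd 1)⁆ = base (diff a) := by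
  have hdiff : diff a = a * (shiftHom p (.ofAdd 1) a)⁻¹ := funext fun i => div_eq_mul_inv _ _
  rw [hdiff, commutatorElement_def, map_mul, map_inv, ← map_inv, base_shiftHom, map_inv, map_inv]
  group

/-- `diffSingle p k = diff^[k] δ₀`: the value at `-m` is `(-1)^m * k.choose m`, as long as
`k < p`, so that the support `{0, -1, …, -k}` does not wrap around. -/
def diffSingle (p k : ℕ) : ZMod p → Multiplicative (ZMod p) :=
  fun i => .ofAdd ((-1) ^ (-i).val * k.choose (-i).val)

theorem diff_diffSingle {k : ℕ} (hk : k + 2 ≤ p) :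
    diff (diffSingle p k) = diffSingle p (k + 1) := by
  have : Fact (1 < p) := ⟨by omega⟩
  funext i
  simp only [diff, diffSingle, ← ofAdd_sub]
  congr 1
  rcases eq_or_ne i 0 with rfl | hi
  · have hval : (-(0 + 1) : ZMod p).val = p - 1 := by
      rw [zero_add, ZMod.val_neg_of_ne_zero, ZMod.val_one]
    rw [hval, Nat.choose_eq_zero_of_lt (by omega : k < p - 1)]
    simp
  · have hval : 1 ≤ (-i).val := by
      rw [Nat.one_le_iff_ne_zero, ne_eq, ZMod.val_eq_zero, neg_eq_zero]; exact hi
    obtain ⟨m, hm⟩ : ∃ m, (-i).val = m + 1 := ⟨_, (Nat.sub_add_cancel hval).symm⟩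
    have hval' : (-(i + 1)).val = m := by
      rw [neg_add, ← sub_eq_add_neg, ZMod.val_sub (by rwa [ZMod.val_one]), ZMod.val_one, hm,
        Nat.add_sub_cancel]
    rw [hm, hval', Nat.choose_succ_succ]
    push_cast
    ring

theorem diffSingle_apply_zero (k : ℕ) : diffSingle p k 0 = .ofAdd 1 := by
  simp [diffSingle]

variable [Fact (1 < p)]

theorem base_diffSingle_notMem_upperCentralSeries {k n : ℕ} (h : k + n + 1 = p) :
    base (diffSingle p k) ∉ Subgroup.upperCentralSeries (WreathCpCp p) n := by
  induction n generalizing k with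
  | zero =>
    intro hmem
    have h1 : diffSingle p k = 1 := base_injective (Subgroup.mem_bot.1 hmem)
    have h0 := congrFun h1 0
    rw [diffSingle_apply_zero] at h0
    exact one_ne_zero (ofAdd_eq_one.1 h0)
  | succ n ih =>
    intro hmem
    refine ih (k := k + 1) (by omega) ?_
    rw [← diff_diffSingle (by omega), ← commutatorElement_base_rot]
    exact Subgroup.mem_upperCentralSeries_succ_iff.1 hmem _

theorem rot_notMem_upperCentralSeries :
    rot (.ofAdd 1) ∉ Subgroup.upperCentralSeries (WreathCpCp p) (p - 1) := by
  have hp : 1 < p := Fact.out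
  obtain ⟨n, hn⟩ : ∃ n, p - 1 = n + 1 := ⟨p - 2, by omega⟩
  rw [hn]
  intro hmem
  apply base_diffSingle_notMem_upperCentralSeries (p := p) (k := 1) (n := n) (by omega)
  rw [← diff_diffSingle (by omega), ← commutatorElement_base_rot, ← commutatorElement_inv]
  exact inv_mem (Subgroup.mem_upperCentralSeries_succ_iff.1 hmem _)

end WreathCpCp

theorem no_wreath_subgroup_of_pCentral_height
    (hp : p.Prime)
    (P : Type*) [Group P]
    (h : Omega p 1 P ≤ upperCentralSeries P (p - 1)) :
    ¬ ∃ H : Subgroup P, Nonempty (WreathCpCp p ≃* H) := by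
  rintro ⟨H, ⟨e⟩⟩
  have : Fact (1 < p) := ⟨hp.one_lt⟩
  let f : WreathCpCp p →* P := H.subtype.comp e.toMonoidHom
  have hf : Function.Injective f := H.subtype_injective.comp e.injective
  have hrot : f (WreathCpCp.rot (.ofAdd 1)) ∈ Omega p 1 P := Subgroup.subset_closure <| by
    rw [Set.mem_ofPred_eq, pow_one, ← map_pow, WreathCpCp.rot_pow_self, map_one]
  exact WreathCpCp.rot_notMem_upperCentralSeries
    (Subgroup.comap_upperCentralSeries_le hf _ (h hrot))
end

section
/- The regular wreath product W = C_p ≀ C_p (p odd) is not p-central of height p−1: there exists an element of order p in W not lying in ζ_{p−1}(W). -/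
variable (p : ℕ)

/-! Commutation with the top generator `t` acts on the base group `(ZMod p)^p` as the forward
difference operator `Δ`, and an element `x ∈ ζ_n(W)` is killed by `n` successive commutations
with `t`. The point mass `δ₀` of the base has order `p`, but `Δ^(p-1) δ₀` takes the value
`(-1)^(p-1) ≠ 0` at `0`, so `δ₀ ∉ ζ_(p-1)(W)`. -/

open SemidirectProduct fwdDiff
open scoped commutatorElement

theorem iterate_commutatorElement_eq_one_of_mem_upperCentralSeries {G : Type*} [Group G]
    (t : G) {n : ℕ} {x : G} (hx : x ∈ Subgroup.upperCentralSeries G n) :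
    (fun y => ⁅t, y⁆)^[n] x = 1 := by
  induction n generalizing x with
  | zero => simpa using hx
  | succ n ih =>
    rw [Function.iterate_succ_apply]
    exact ih <| commutatorElement_inv x t ▸
      inv_mem (Subgroup.mem_upperCentralSeries_succ_iff.mp hx t)

theorem not_omega_one_le_upperCentralSeries {G : Type*} [Group G] {p n : ℕ} {x t : G}
    (hx : x ^ p = 1) (ht : (fun y => ⁅t, y⁆)^[n] x ≠ 1) :
    ¬ Omega p 1 G ≤ Subgroup.upperCentralSeries G n :=
  fun hle => ht <| iterate_commutatorElement_eq_one_of_mem_upperCentralSeries t <|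
    hle <| Subgroup.subset_closure (by simpa using hx)

theorem SemidirectProduct.commutatorElement_inr_inl {N G : Type*} [Group N] [Group G]
    {φ : G →* MulAut N} (g : G) (n : N) :
    ⁅(inr g : N ⋊[φ] G), (inl n : N ⋊[φ] G)⁆ = inl (φ g n * n⁻¹) := by
  ext <;> simp [commutatorElement_def]

theorem SemidirectProduct.iterate_commutatorElement_inr_inl {N G : Type*} [Group N] [Group G]
    {φ : G →* MulAut N} (g : G) (n : N) (k : ℕ) :
    (fun y : N ⋊[φ] G => ⁅(inr g : N ⋊[φ] G), y⁆)^[k] (inl n) =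
      inl ((fun m => φ g m * m⁻¹)^[k] n) :=
  (Function.Semiconj.iterate_right (fun m => (commutatorElement_inr_inl g m).symm) k n).symm

theorem fwdDiff_iter_pi_single_apply_zero {p : ℕ} {R : Type*} [Ring R] {n : ℕ} (hn : n < p) :
    (Δ_[1])^[n] (Pi.single 0 1 : ZMod p → R) 0 = (-1) ^ n := by
  rw [fwdDiff_iter_eq_sum_shift, Finset.sum_eq_single 0]
  · simp
  · intro k hk hk0
    have : (k : ZMod p) ≠ 0 := by
      rw [Ne, ZMod.natCast_eq_zero_iff]
      exact fun hdvd =>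
        hk0 (Nat.eq_zero_of_dvd_of_lt hdvd ((Finset.mem_range.mp hk).trans_le hn))
    simp [this]
  · simp

theorem iterate_shiftHom_one_mul_inv (f : ZMod p → ZMod p) (k : ℕ) :
    (fun m => shiftHom p (Multiplicative.ofAdd 1) m * m⁻¹)^[k] (Multiplicative.ofAdd ∘ f) =
      Multiplicative.ofAdd ∘ (Δ_[1])^[k] f := by
  refine (Function.Semiconj.iterate_right (fun f => ?_) k f).symm
  funext i
  simp [shiftHom, shiftAut, fwdDiff, div_eq_mul_inv]

theorem not_omega_one_le_upperCentralSeries_sub_one (hp : 1 < p) :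
    ¬ Omega p 1 ((ZMod p → Multiplicative (ZMod p)) ⋊[shiftHom p] Multiplicative (ZMod p)) ≤
      Subgroup.upperCentralSeries _ (p - 1) := by
  have : Fact (1 < p) := ⟨hp⟩
  refine not_omega_one_le_upperCentralSeries (x := inl (Multiplicative.ofAdd ∘ Pi.single 0 1))
    (t := inr (Multiplicative.ofAdd 1)) ?_ ?_
  · rw [← map_pow, ← map_one inl]
    congr 1
    funext i
    simp [← ofAdd_nsmul]
  · rw [iterate_commutatorElement_inr_inl, iterate_shiftHom_one_mul_inv]
    intro h
    have h0 : (Δ_[1])^[p - 1] (Pi.single 0 1 : ZMod p → ZMod p) 0 = 0 := by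
      simpa using congrFun (congrArg left h) 0
    rw [fwdDiff_iter_pi_single_apply_zero (by omega)] at h0
    exact neg_one_pow_ne_zero _ h0

theorem wreath_not_pCentral_height
    (hp : p.Prime) :
    ¬ Omega p 1 (WreathCpCp p) ≤ upperCentralSeries (WreathCpCp p) (p - 1) :=
  not_omega_one_le_upperCentralSeries_sub_one p hp.one_lt
end
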